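/- arXiv:2303.07915 — 5 statements merged into one kernel-verified Lean document; each statement's English description precedes it below -/
import Mathlib

section
/- Let ρ be a permutation of ℕ such that there exists n with every cycle of ρ of length at most n. Then a permutation γ of ℕ lies in the closure of the conjugacy class of ρ (in the pointwise convergence topology on Sym(ℕ)) if and only if for every ι ∈ (ℕ \ {0}) ∪ {∞}, the number of cycles of γ of length ι is at most the number of cycles of ρ of length ι. -/
/-- The cycle (orbit) of `x` under the permutation `ρ`. -/
def orbitOf (ρ : Equiv.Perm ℕ) (x : ℕ) : Set ℕ := {y | ∃ k : ℤ, (ρ ^ k) x = y}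

/-- The set of cycles of `ρ`. -/
def cyclesOf (ρ : Equiv.Perm ℕ) : Set (Set ℕ) := Set.range (orbitOf ρ)

/-- The cycle function: the number (in `ℕ ∪ {∞}`) of cycles of `ρ` of length `ι`,
where `ι ∈ ℕ ∪ {∞}` (length `∞` means the cycle is infinite). -/
noncomputable def cycleCount (ρ : Equiv.Perm ℕ) (ι : ℕ∞) : ℕ∞ :=
  {s | s ∈ cyclesOf ρ ∧ s.encard = ι}.encard

/-- The pointwise convergence topology on `Sym(ℕ)`. -/
instance : TopologicalSpace (Equiv.Perm ℕ) :=
  TopologicalSpace.induced (fun g : Equiv.Perm ℕ => (⇑g, ⇑g.symm)) inferInstance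

open Set Function Equiv Filter Topology

/-!
A finite cycle of `γ` on which `g` agrees with `γ` is also a cycle of `g`, and conjugates of `ρ`
have the cycle counts of `ρ`. So approximating `γ` by conjugates of `ρ` on finitely many finite
cycles of `γ` bounds the cycle counts of `γ` by those of `ρ`. Infinite cycles are excluded by the
bound `n`: a conjugate agreeing with `γ` on `x, γ x, …, γ^(n-1) x` has a cycle of some length
`p ≤ n` through `x`, so `γ^p x = x`.

Conversely, the finitely many cycles of `γ` meeting a given finite set are matched one at a time.
If a conjugate `g` of `ρ` already agrees with `γ` on some of them, the count inequality leaves a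
cycle of `g` of the length of the next cycle `C` that is none of these, and conjugating `g` by a
permutation that maps it onto `C` equivariantly, and fixes the cycles already matched, extends
the agreement to `C`.
-/

namespace Equiv.Perm

variable {α : Type*}

theorem zpow_apply_eq_zpow_apply_iff (g : Perm α) (x : α) (i j : ℤ) :
    (g ^ i) x = (g ^ j) x ↔ (minimalPeriod g x : ℤ) ∣ i - j := by
  have h : (g ^ (-j + i)) x = x ↔ (minimalPeriod g x : ℤ) ∣ -j + i :=
    MulAction.zpow_smul_eq_iff_minimalPeriod_dvd (a := g) (b := x)
  rw [sub_eq_neg_add, ← h, zpow_add, mul_apply, zpow_neg, inv_eq_iff_eq, eq_comm]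

theorem pow_apply_eq_pow_apply_of_eqOn {g γ : Perm α} {x : α} {n : ℕ}
    (h : EqOn g γ ((fun i => (γ ^ i) x) '' Iio n)) {i : ℕ} (hi : i ≤ n) :
    (g ^ i) x = (γ ^ i) x := by
  induction i with
  | zero => rfl
  | succ i ih =>
    rw [pow_succ', pow_succ', mul_apply, mul_apply, ih (by omega)]
    exact h ⟨i, Nat.lt_of_succ_le hi, rfl⟩

theorem exists_isConj_eqOn_of_injOn {g γ : Perm α} {s : Set α} (hs : s.Finite)
    (hγs : MapsTo γ s s) {φ : α → α} (hφ : InjOn φ s) (hcomm : ∀ x ∈ s, g (φ x) = φ (γ x)) :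
    ∃ g', IsConj g g' ∧ EqOn g' γ s := by
  have := hs.to_subtype
  obtain ⟨σ, hσ⟩ := exists_extending_pair (fun x : s => (x : α)) (fun x : s => φ x)
    Subtype.val_injective (hφ.injective)
  refine ⟨σ⁻¹ * g * σ, isConj_iff.2 ⟨σ⁻¹, by rw [inv_inv]⟩, fun x hx => ?_⟩
  rw [mul_apply, mul_apply, hσ ⟨x, hx⟩, hcomm x hx, ← hσ ⟨γ x, hγs hx⟩]
  exact σ.symm_apply_apply _

end Equiv.Perm

section Cycles

variable {g γ : Perm ℕ} {x y : ℕ}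

theorem mem_orbitOf_self (g : Perm ℕ) (x : ℕ) : x ∈ orbitOf g x := Perm.SameCycle.refl g x

theorem orbitOf_eq_of_mem (h : y ∈ orbitOf g x) : orbitOf g y = orbitOf g x :=
  Set.ext fun _ => ⟨Perm.SameCycle.trans h, (Perm.SameCycle.symm h).trans⟩

theorem mapsTo_orbitOf (g : Perm ℕ) (x : ℕ) : MapsTo g (orbitOf g x) (orbitOf g x) :=
  fun _ h => Perm.sameCycle_apply_right.2 h

theorem mapsTo_of_mem_cyclesOf {s : Set ℕ} (hs : s ∈ cyclesOf g) : MapsTo g s s := by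
  obtain ⟨x, rfl⟩ := hs
  exact mapsTo_orbitOf g x

theorem eq_of_mem_cyclesOf {s t : Set ℕ} (hs : s ∈ cyclesOf g) (ht : t ∈ cyclesOf g)
    (hxs : x ∈ s) (hxt : x ∈ t) : s = t := by
  obtain ⟨a, rfl⟩ := hs
  obtain ⟨b, rfl⟩ := ht
  rw [← orbitOf_eq_of_mem hxs, orbitOf_eq_of_mem hxt]

theorem disjoint_sUnion_of_notMem {s : Set ℕ} {T : Set (Set ℕ)} (hs : s ∈ cyclesOf g)
    (hT : T ⊆ cyclesOf g) (hsT : s ∉ T) : Disjoint s (⋃₀ T) :=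
  disjoint_sUnion_right.2 fun _ ht => disjoint_left.2 fun _ hxs hxt =>
    hsT (eq_of_mem_cyclesOf hs (hT ht) hxs hxt ▸ ht)

theorem mapsTo_sUnion_of_subset_cyclesOf {T : Set (Set ℕ)} (hT : T ⊆ cyclesOf g) :
    MapsTo g (⋃₀ T) (⋃₀ T) := by
  rintro x ⟨s, hs, hx⟩
  exact ⟨s, hs, mapsTo_of_mem_cyclesOf (hT hs) hx⟩

theorem orbitOf_subset_of_mapsTo {s : Set ℕ} (hs : s.Finite) (hg : MapsTo g s s)
    (hx : x ∈ s) : orbitOf g x ⊆ s := by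
  have := hs.to_subtype
  rintro _ ⟨k, rfl⟩
  have := ((g.subtypePermOfFintype (p := (· ∈ s)) hg ^ k) ⟨x, hx⟩).2
  rwa [Perm.subtypePerm_zpow, Perm.subtypePerm_apply] at this

theorem orbitOf_eq_of_eqOn (hfin : (orbitOf γ x).Finite) (h : EqOn g γ (orbitOf γ x)) :
    orbitOf g x = orbitOf γ x := by
  have hsub : orbitOf g x ⊆ orbitOf γ x := orbitOf_subset_of_mapsTo hfin
    (fun y hy => h hy ▸ mapsTo_orbitOf γ x hy) (mem_orbitOf_self γ x)
  exact hsub.antisymm (orbitOf_subset_of_mapsTo (hfin.subset hsub)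
    (fun y hy => h (hsub hy) ▸ mapsTo_orbitOf g x hy) (mem_orbitOf_self g x))

theorem mem_cyclesOf_of_eqOn {s : Set ℕ} (hs : s ∈ cyclesOf γ) (hfin : s.Finite)
    (h : EqOn g γ s) : s ∈ cyclesOf g := by
  obtain ⟨x, rfl⟩ := hs
  exact ⟨x, orbitOf_eq_of_eqOn hfin h⟩

theorem orbit_zpowers_eq_orbitOf (g : Perm ℕ) (x : ℕ) :
    MulAction.orbit (Subgroup.zpowers g) x = orbitOf g x := by
  ext
  simp only [MulAction.mem_orbit_iff, Subgroup.exists_zpowers]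
  rfl

theorem encard_orbitOf (g : Perm ℕ) (x : ℕ) :
    (orbitOf g x).encard = if minimalPeriod g x = 0 then ⊤ else (minimalPeriod g x : ℕ∞) := by
  have e : orbitOf g x ≃ ZMod (minimalPeriod g x) :=
    (Equiv.setCongr (orbit_zpowers_eq_orbitOf g x).symm).trans (MulAction.orbitZPowersEquiv g x)
  rw [← ENat.card_coe_set_eq, ENat.card_congr e]
  split_ifs with hp
  · rw [hp]; exact ENat.card_eq_top_of_infinite
  · have : NeZero (minimalPeriod g x) := ⟨hp⟩
    rw [ENat.card_eq_coe_fintype_card, ZMod.card]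

theorem finite_orbitOf_iff : (orbitOf g x).Finite ↔ minimalPeriod g x ≠ 0 := by
  rw [← encard_ne_top_iff, encard_orbitOf]
  split_ifs with hp <;> simp [hp]

theorem minimalPeriod_eq_of_encard_orbitOf_eq {b d : ℕ}
    (h : (orbitOf γ b).encard = (orbitOf g d).encard) : minimalPeriod γ b = minimalPeriod g d := by
  rw [encard_orbitOf, encard_orbitOf] at h
  split_ifs at h with h1 h2 h2 <;> simp_all

theorem exists_bijOn_orbitOf {b d : ℕ} (h : minimalPeriod γ b = minimalPeriod g d) :
    ∃ φ : ℕ → ℕ, BijOn φ (orbitOf γ b) (orbitOf g d) ∧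
      ∀ x ∈ orbitOf γ b, φ (γ x) = g (φ x) := by
  have key : ∀ i j : ℤ, (γ ^ i) b = (γ ^ j) b ↔ (g ^ i) d = (g ^ j) d := fun i j => by
    rw [Perm.zpow_apply_eq_zpow_apply_iff, Perm.zpow_apply_eq_zpow_apply_iff, h]
  set φ : ℕ → ℕ := fun x => (g ^ invFun (fun i : ℤ => (γ ^ i) b) x) d
  have hφ : ∀ i : ℤ, φ ((γ ^ i) b) = (g ^ i) d := fun i =>
    (key _ _).1 (invFun_eq (f := fun i : ℤ => (γ ^ i) b) ⟨i, rfl⟩)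
  refine ⟨φ, ⟨?_, ?_, ?_⟩, ?_⟩
  · rintro _ ⟨i, rfl⟩
    exact ⟨i, (hφ i).symm⟩
  · rintro _ ⟨i, rfl⟩ _ ⟨j, rfl⟩ hij
    rw [hφ, hφ] at hij
    exact (key i j).2 hij
  · rintro _ ⟨i, rfl⟩
    exact ⟨_, ⟨i, rfl⟩, hφ i⟩
  · rintro _ ⟨i, rfl⟩
    rw [← Perm.mul_apply, ← zpow_one_add, hφ, hφ, zpow_one_add, Perm.mul_apply]

end Cycles

section Conjugation

variable {ρ g : Perm ℕ}

theorem orbitOf_conj (σ ρ : Perm ℕ) (x : ℕ) :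
    orbitOf (σ * ρ * σ⁻¹) x = σ '' orbitOf ρ (σ⁻¹ x) := by
  ext y
  rw [σ.image_eq_preimage_symm]
  exact Perm.sameCycle_conj

theorem cyclesOf_conj (σ ρ : Perm ℕ) : cyclesOf (σ * ρ * σ⁻¹) = image σ '' cyclesOf ρ := by
  have : orbitOf (σ * ρ * σ⁻¹) = (image σ ∘ orbitOf ρ) ∘ ⇑σ⁻¹ := funext (orbitOf_conj σ ρ)
  rw [cyclesOf, this, EquivLike.range_comp, range_comp, cyclesOf]

theorem cycleCount_conj (σ ρ : Perm ℕ) (ι : ℕ∞) :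
    cycleCount (σ * ρ * σ⁻¹) ι = cycleCount ρ ι := by
  have : {s | s ∈ cyclesOf (σ * ρ * σ⁻¹) ∧ s.encard = ι} =
      image σ '' {s | s ∈ cyclesOf ρ ∧ s.encard = ι} := by
    ext s
    simp only [cyclesOf_conj, mem_ofPred_eq, mem_image]
    constructor
    · rintro ⟨⟨t, ht, rfl⟩, hι⟩
      exact ⟨t, ⟨ht, σ.injective.encard_image t ▸ hι⟩, rfl⟩
    · rintro ⟨t, ⟨ht, hι⟩, rfl⟩
      exact ⟨⟨t, ht, rfl⟩, σ.injective.encard_image t ▸ hι⟩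
  rw [cycleCount, this, (image_injective.2 σ.injective).encard_image, cycleCount]

theorem cycleCount_of_isConj (hc : IsConj ρ g) (ι : ℕ∞) : cycleCount g ι = cycleCount ρ ι := by
  obtain ⟨σ, rfl⟩ := isConj_iff.1 hc
  exact cycleCount_conj σ ρ ι

theorem cycleCount_eq_zero_iff {ι : ℕ∞} :
    cycleCount g ι = 0 ↔ ∀ s ∈ cyclesOf g, s.encard ≠ ι := by
  simp [cycleCount, encard_eq_zero, eq_empty_iff_forall_notMem]

theorem exists_mem_cyclesOf_encard_eq_of_isConj (hc : IsConj ρ g) {s : Set ℕ}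
    (hs : s ∈ cyclesOf g) : ∃ t ∈ cyclesOf ρ, t.encard = s.encard := by
  by_contra! h
  rw [← cycleCount_eq_zero_iff, ← cycleCount_of_isConj hc, cycleCount_eq_zero_iff] at h
  exact h s hs rfl

end Conjugation

section Approximation

variable {ρ γ g : Perm ℕ}

theorem exists_mem_cyclesOf_notMem {T : Set (Set ℕ)} {C : Set ℕ} (hT : T.Finite)
    (hTγ : T ⊆ cyclesOf γ) (hC : C ∈ cyclesOf γ) (hCT : C ∉ T)
    (hcount : cycleCount γ C.encard ≤ cycleCount g C.encard) :
    ∃ D ∈ cyclesOf g, D.encard = C.encard ∧ D ∉ T := by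
  set A := {s | s ∈ T ∧ s.encard = C.encard}
  have hA : A.encard < cycleCount g C.encard := calc
    A.encard < (insert C A).encard :=
      (hT.subset fun _ hs => hs.1).encard_lt_encard (ssubset_insert fun h => hCT h.1)
    _ ≤ cycleCount γ C.encard :=
      encard_le_encard (insert_subset ⟨hC, rfl⟩ fun _ hs => ⟨hTγ hs.1, hs.2⟩)
    _ ≤ cycleCount g C.encard := hcount
  obtain ⟨D, ⟨hD, hDC⟩, hDA⟩ := not_subset.1 fun h => (encard_le_encard h).not_gt hA
  exact ⟨D, hD, hDC, fun hDT => hDA ⟨hDT, hDC⟩⟩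

theorem exists_isConj_eqOn_sUnion_insert {T : Set (Set ℕ)} {C : Set ℕ} (hT : T.Finite)
    (hTγ : T ⊆ cyclesOf γ) (hfin : ∀ s ∈ cyclesOf γ, s.Finite) (hC : C ∈ cyclesOf γ)
    (hCT : C ∉ T) (hcount : cycleCount γ C.encard ≤ cycleCount g C.encard)
    (hgγ : EqOn g γ (⋃₀ T)) : ∃ g', IsConj g g' ∧ EqOn g' γ (⋃₀ insert C T) := by
  classical
  have hTg : T ⊆ cyclesOf g := fun s hs =>
    mem_cyclesOf_of_eqOn (hTγ hs) (hfin s (hTγ hs)) (hgγ.mono (subset_sUnion_of_mem hs))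
  obtain ⟨D, hD, hDC, hDT⟩ := exists_mem_cyclesOf_notMem hT hTγ hC hCT hcount
  have hCU := disjoint_sUnion_of_notMem hC hTγ hCT
  have hDU := disjoint_sUnion_of_notMem hD hTg hDT
  have hγU := mapsTo_sUnion_of_subset_cyclesOf hTγ
  obtain ⟨b, rfl⟩ := hC
  obtain ⟨d, rfl⟩ := hD
  obtain ⟨φ, hφ, hφγ⟩ := exists_bijOn_orbitOf (minimalPeriod_eq_of_encard_orbitOf_eq hDC.symm)
  set C := orbitOf γ b
  set U := ⋃₀ T
  set ψ := C.piecewise φ id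
  have hψC : EqOn ψ φ C := fun x hx => piecewise_eq_of_mem _ _ _ hx
  have hψU : EqOn ψ id U := fun x hx => piecewise_eq_of_notMem _ _ _ (disjoint_right.1 hCU hx)
  have hinj : InjOn ψ (C ∪ U) := (injOn_union hCU).2 ⟨hφ.injOn.congr hψC.symm,
    (injOn_id U).congr hψU.symm, fun x hx y hy hxy =>
      disjoint_left.1 hDU (hφ.mapsTo hx) (by rw [hψC hx, hψU hy] at hxy; rwa [hxy])⟩
  have hcomm : ∀ x ∈ C ∪ U, g (ψ x) = ψ (γ x) := by
    rintro x (hx | hx)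
    · rw [hψC hx, hψC (mapsTo_orbitOf γ b hx), hφγ x hx]
    · rw [hψU hx, hψU (hγU hx), id, id, hgγ hx]
  rw [sUnion_insert]
  exact Perm.exists_isConj_eqOn_of_injOn ((hfin C ⟨b, rfl⟩).union
    (hT.sUnion fun s hs => hfin s (hTγ hs))) ((mapsTo_orbitOf γ b).union_union hγU) hinj hcomm

theorem exists_isConj_eqOn_sUnion (hfin : ∀ s ∈ cyclesOf γ, s.Finite)
    (hle : ∀ ι : ℕ∞, ι ≠ 0 → cycleCount γ ι ≤ cycleCount ρ ι) {T : Set (Set ℕ)}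
    (hT : T.Finite) (hTγ : T ⊆ cyclesOf γ) : ∃ g, IsConj ρ g ∧ EqOn g γ (⋃₀ T) := by
  induction T, hT using Set.Finite.induction_on with
  | empty => exact ⟨ρ, IsConj.refl ρ, by simp⟩
  | @insert C T hCT hT ih =>
    obtain ⟨hC, hTγ⟩ := insert_subset_iff.1 hTγ
    obtain ⟨g, hg, hgγ⟩ := ih hTγ
    have hC0 : C.encard ≠ 0 := by
      obtain ⟨b, rfl⟩ := hC
      exact encard_ne_zero.2 ⟨b, mem_orbitOf_self γ b⟩
    obtain ⟨g', hgg', hg'γ⟩ := exists_isConj_eqOn_sUnion_insert hT hTγ hfin hC hCT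
      ((hle _ hC0).trans_eq (cycleCount_of_isConj hg _).symm) hgγ
    exact ⟨g', hg.trans hgg', hg'γ⟩

end Approximation

theorem mem_closure_iff_exists_eqOn {S : Set (Perm ℕ)} {γ : Perm ℕ} :
    γ ∈ closure S ↔ ∀ F : Set ℕ, F.Finite → ∃ g ∈ S, EqOn g γ F ∧ EqOn g.symm γ.symm F := by
  have basis : (𝓝 γ).HasBasis (fun I : Set ℕ × Set ℕ => I.1.Finite ∧ I.2.Finite) fun I =>
      (fun g : Perm ℕ => (⇑g, ⇑g.symm)) ⁻¹'
        ({f | ∀ i ∈ I.1, f i = γ i} ×ˢ {f | ∀ i ∈ I.2, f i = γ.symm i}) := by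
    rw [nhds_induced, nhds_prod_eq, nhds_pi, nhds_pi, nhds_discrete]
    exact ((hasBasis_pi_pure _).prod (hasBasis_pi_pure _)).comap _
  rw [mem_closure_iff_nhds_basis basis]
  refine ⟨fun h F hF => ?_, fun h I hI => ?_⟩
  · obtain ⟨g, hgS, hg, hg'⟩ := h (F, F) ⟨hF, hF⟩
    exact ⟨g, hgS, hg, hg'⟩
  · obtain ⟨g, hgS, hg, hg'⟩ := h _ (hI.1.union hI.2)
    exact ⟨g, hgS, fun i hi => hg (Or.inl hi), fun i hi => hg' (Or.inr hi)⟩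

section Closure

variable {ρ γ : Perm ℕ}

theorem finite_of_mem_cyclesOf_of_mem_closure {n : ℕ} (h : ∀ s ∈ cyclesOf ρ, s.encard ≤ n)
    (hγ : γ ∈ closure {g | IsConj ρ g}) : ∀ s ∈ cyclesOf γ, s.Finite := by
  rintro _ ⟨x, rfl⟩
  obtain ⟨g, hg, hgγ, -⟩ :=
    mem_closure_iff_exists_eqOn.1 hγ _ ((finite_Iio n).image fun i => (γ ^ i) x)
  obtain ⟨t, ht, hte⟩ := exists_mem_cyclesOf_encard_eq_of_isConj hg ⟨x, rfl⟩
  have hgx : (orbitOf g x).encard ≤ n := hte ▸ h t ht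
  obtain ⟨hp, hpn⟩ : minimalPeriod g x ≠ 0 ∧ minimalPeriod g x ≤ n := by
    rw [encard_orbitOf] at hgx
    split_ifs at hgx with hp
    · simp at hgx
    · exact ⟨hp, mod_cast hgx⟩
  have hγx : IsPeriodicPt γ (minimalPeriod g x) x := by
    rw [IsPeriodicPt, IsFixedPt, Perm.iterate_eq_pow,
      ← Perm.pow_apply_eq_pow_apply_of_eqOn hgγ hpn, ← Perm.iterate_eq_pow]
    exact iterate_minimalPeriod
  exact finite_orbitOf_iff.2 (hγx.minimalPeriod_pos (Nat.pos_of_ne_zero hp)).ne'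

theorem cycleCount_le_of_mem_closure (hγ : γ ∈ closure {g | IsConj ρ g}) {ι : ℕ∞}
    (hι : ι ≠ ⊤) : cycleCount γ ι ≤ cycleCount ρ ι := by
  refine ENat.forall_natCast_le_iff_le.1 fun m hm => ?_
  obtain ⟨T, hT, hTm⟩ := exists_subset_encard_eq hm
  have hTfin : T.Finite := finite_of_encard_eq_coe hTm
  have hsfin : ∀ s ∈ T, s.Finite := fun s hs => encard_ne_top_iff.1 ((hT hs).2 ▸ hι)
  obtain ⟨g, hg, hgγ, -⟩ := mem_closure_iff_exists_eqOn.1 hγ _ (hTfin.sUnion hsfin)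
  have hTg : T ⊆ {s | s ∈ cyclesOf g ∧ s.encard = ι} := fun s hs =>
    ⟨mem_cyclesOf_of_eqOn (hT hs).1 (hsfin s hs) (hgγ.mono (subset_sUnion_of_mem hs)), (hT hs).2⟩
  calc (m : ℕ∞) = T.encard := hTm.symm
    _ ≤ cycleCount g ι := encard_le_encard hTg
    _ = cycleCount ρ ι := cycleCount_of_isConj hg ι

theorem mem_closure_of_cycleCount_le (hfin : ∀ s ∈ cyclesOf γ, s.Finite)
    (hle : ∀ ι : ℕ∞, ι ≠ 0 → cycleCount γ ι ≤ cycleCount ρ ι) :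
    γ ∈ closure {g | IsConj ρ g} := by
  refine mem_closure_iff_exists_eqOn.2 fun F hF => ?_
  obtain ⟨g, hg, hgγ⟩ := exists_isConj_eqOn_sUnion hfin hle (hF.image (orbitOf γ))
    (image_subset_range _ _)
  have hsub : ∀ x ∈ F, orbitOf γ x ⊆ ⋃₀ (orbitOf γ '' F) := fun x hx =>
    subset_sUnion_of_mem (mem_image_of_mem _ hx)
  refine ⟨g, hg, fun x hx => hgγ (hsub x hx (mem_orbitOf_self γ x)), fun x hx => ?_⟩
  have hx' : γ.symm x ∈ orbitOf γ x := ⟨-1, by simp⟩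
  rw [Equiv.symm_apply_eq, hgγ (hsub x hx hx'), Equiv.apply_symm_apply]

end Closure

/-- if every cycle of `ρ` has length at most `n`, then `γ` lies in the
closure of the conjugacy class of `ρ` iff `f_γ(ι) ≤ f_ρ(ι)` for every
`ι ∈ (ℕ \ {0}) ∪ {∞}`. -/
theorem stmt2 (ρ : Equiv.Perm ℕ) (n : ℕ)
    (h : ∀ s ∈ cyclesOf ρ, s.encard ≤ (n : ℕ∞)) (γ : Equiv.Perm ℕ) :
    γ ∈ closure {g : Equiv.Perm ℕ | IsConj ρ g} ↔
      ∀ ι : ℕ∞, ι ≠ 0 → cycleCount γ ι ≤ cycleCount ρ ι := by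
  refine ⟨fun hγ ι _ => ?_, fun hle => mem_closure_of_cycleCount_le ?_ hle⟩
  · rcases eq_or_ne ι ⊤ with rfl | hι
    · have hfin := finite_of_mem_cyclesOf_of_mem_closure h hγ
      rw [cycleCount_eq_zero_iff.2 fun s hs => encard_ne_top_iff.2 (hfin s hs)]
      exact zero_le
    · exact cycleCount_le_of_mem_closure hγ hι
  · have hρ : cycleCount ρ ⊤ = 0 :=
      cycleCount_eq_zero_iff.2 fun s hs => encard_ne_top_iff.2 (finite_of_encard_le_coe (h s hs))
    have hγ := cycleCount_eq_zero_iff.1 (le_zero_iff.1 (hρ ▸ hle ⊤ ENat.top_ne_zero))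
    exact fun s hs => encard_ne_top_iff.1 (hγ s hs)
end

section
/- Let γ be an order-automorphism of (ℚ, <) all of whose orbitals have parity + (i.e., γ(x) > x for all x). Then γ lies in the closure in Aut(ℚ, <) of the conjugacy class of the shift automorphism st(x) = x + 1. -/
/-!
With `τ = σ⁻¹` it suffices to find an order automorphism `τ` of `ℚ` with
`τ (γ a) = τ a + 1` for `a ∈ A`. On the finite set `B = A ∪ γ A` such values are chosen
from left to right: a point `γ a` is forced to get the value `τ a + 1`, any other point
gets a value above all earlier ones and below `τ a + 1` for every earlier `a` with
`γ a` further right; the invariant `b < γ a → τ b < τ a + 1` keeps this possible.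
A strictly monotone map on a finite subset of `ℚ` then extends to an automorphism by
the back-and-forth argument.
-/

namespace Order.PartialIso

variable {α β : Type*} [LinearOrder α] [LinearOrder β]
  [Countable α] [DenselyOrdered α] [NoMinOrder α] [NoMaxOrder α] [Nonempty α]
  [Countable β] [DenselyOrdered β] [NoMinOrder β] [NoMaxOrder β] [Nonempty β]

/-- Back and forth, started from `f` instead of the empty partial isomorphism. -/
theorem exists_orderIso_extension (f : PartialIso α β) :
    ∃ g : α ≃o β, ∀ p ∈ f.val, g p.1 = p.2 := by
  cases nonempty_encodable α
  cases nonempty_encodable β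
  let cofinals : α ⊕ β → Cofinal (PartialIso α β) := fun p ↦
    Sum.recOn p (definedAtLeft β) (definedAtRight α)
  let I : Ideal (PartialIso α β) := idealOfCofinals f cofinals
  let F a := funOfIdeal a I (cofinal_meets_idealOfCofinals _ cofinals (Sum.inl a))
  let G b := invOfIdeal b I (cofinal_meets_idealOfCofinals _ cofinals (Sum.inr b))
  refine ⟨OrderIso.ofCmpEqCmp (fun a ↦ (F a).val) (fun b ↦ (G b).val) fun a b ↦ ?_, ?_⟩
  · obtain ⟨f₁, hf₁, ha⟩ := (F a).prop
    obtain ⟨f₂, hf₂, hb⟩ := (G b).prop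
    obtain ⟨m, -, hf₁m, hf₂m⟩ := I.directed _ hf₁ _ hf₂
    exact m.prop (a, _) (hf₁m ha) (_, b) (hf₂m hb)
  · rintro ⟨a, b⟩ hab
    obtain ⟨f₁, hf₁, ha⟩ := (F a).prop
    obtain ⟨m, -, hf₁m, hfm⟩ := I.directed _ hf₁ _ (mem_idealOfCofinals f cofinals)
    have := m.prop (a, _) (hf₁m ha) (a, b) (hfm hab)
    rwa [cmp_self_eq_eq, eq_comm, cmp_eq_eq_iff] at this

end Order.PartialIso

theorem exists_orderIso_eq_of_strictMonoOn {α β : Type*} [LinearOrder α] [LinearOrder β]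
    [Countable α] [DenselyOrdered α] [NoMinOrder α] [NoMaxOrder α] [Nonempty α]
    [Countable β] [DenselyOrdered β] [NoMinOrder β] [NoMaxOrder β] [Nonempty β]
    (B : Finset α) (v : α → β) (hv : StrictMonoOn v B) :
    ∃ g : α ≃o β, ∀ b ∈ B, g b = v b := by
  classical
  let f : Order.PartialIso α β := ⟨B.image fun b ↦ (b, v b), by
    simp only [Finset.mem_image]
    rintro _ ⟨x, hx, rfl⟩ _ ⟨y, hy, rfl⟩
    exact (hv.cmp_map_eq hx hy).symm⟩
  obtain ⟨g, hg⟩ := f.exists_orderIso_extension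
  exact ⟨g, fun b hb ↦ hg (b, v b) (Finset.mem_image_of_mem _ hb)⟩

structure IsShiftChart {α K : Type*} [Preorder α] [Preorder K] [Add K] [One K]
    (f : α → α) (v : α → K) (s : Finset α) : Prop where
  strictMonoOn : StrictMonoOn v s
  apply_eq_add_one : ∀ a ∈ s, f a ∈ s → v (f a) = v a + 1
  lt_add_one_of_lt : ∀ a ∈ s, ∀ b ∈ s, b < f a → v b < v a + 1

section ShiftChart

variable {α K : Type*} [LinearOrder α] [Field K] [LinearOrder K] [IsStrictOrderedRing K]
  {f : α → α} {v : α → K} {s : Finset α}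

theorem IsShiftChart.exists_value_insert_max (hf : StrictMono f) (h : IsShiftChart f v s)
    {m : α} (hm : ∀ x ∈ s, x < m) :
    ∃ c : K, (∀ x ∈ s, v x < c) ∧ (∀ a ∈ s, m < f a → c < v a + 1) ∧
      ∀ a ∈ s, f a = m → c = v a + 1 := by
  classical
  by_cases hforced : ∃ a ∈ s, f a = m
  · obtain ⟨a, ha, rfl⟩ := hforced
    refine ⟨v a + 1, fun x hx ↦ h.lt_add_one_of_lt a ha x hx (hm x hx), fun a' ha' hlt ↦ ?_,
      fun a' ha' heq ↦ by rw [hf.injective heq]⟩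
    simpa using h.strictMonoOn ha ha' (hf.lt_iff_lt.mp hlt)
  · push Not at hforced
    obtain ⟨c, hlo, hhi⟩ := Order.exists_between_finsets (s.image v)
      ((s.filter fun a ↦ m < f a).image fun a ↦ v a + 1) (by
        simp only [Finset.mem_image, Finset.mem_filter]
        rintro _ ⟨x, hx, rfl⟩ _ ⟨a, ⟨ha, hma⟩, rfl⟩
        exact h.lt_add_one_of_lt a ha x hx ((hm x hx).trans hma))
    exact ⟨c, fun x hx ↦ hlo _ (Finset.mem_image_of_mem _ hx),
      fun a ha hma ↦ hhi _ (Finset.mem_image_of_mem _ (Finset.mem_filter.mpr ⟨ha, hma⟩)),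
      fun a ha heq ↦ absurd heq (hforced a ha)⟩

theorem IsShiftChart.insert_max [DecidableEq α] (hlt : ∀ x, x < f x) (h : IsShiftChart f v s)
    {m : α} (hm : ∀ x ∈ s, x < m) {c : K} (hlo : ∀ x ∈ s, v x < c)
    (hhi : ∀ a ∈ s, m < f a → c < v a + 1) (hforced : ∀ a ∈ s, f a = m → c = v a + 1) :
    IsShiftChart f (Function.update v m c) (insert m s) := by
  have hms : m ∉ s := fun hm' ↦ (hm m hm').false
  have hv : ∀ x ∈ s, Function.update v m c x = v x := fun x hx ↦
    Function.update_of_ne (ne_of_mem_of_not_mem hx hms) _ _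
  have hfm : f m ∉ insert m s := by
    simp only [Finset.mem_insert, not_or]
    exact ⟨(hlt m).ne', fun hs ↦ ((hm _ hs).trans (hlt m)).false⟩
  refine ⟨fun x hx y hy hxy ↦ ?_, fun a ha hfa ↦ ?_, fun a ha b hb hba ↦ ?_⟩
  · obtain hxm | hx := Finset.mem_insert.mp hx <;> obtain hym | hy := Finset.mem_insert.mp hy
    · exact absurd hxy (by simp [hxm, hym])
    · exact absurd hxy (hxm ▸ (hm y hy).asymm)
    · simpa [hym, hv x hx] using hlo x hx
    · simpa [hv x hx, hv y hy] using h.strictMonoOn hx hy hxy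
  · obtain ham | ha := Finset.mem_insert.mp ha
    · exact absurd (ham ▸ hfa) hfm
    obtain hfam | hfa := Finset.mem_insert.mp hfa
    · simpa [hfam, hv a ha] using hforced a ha hfam
    · simpa [hv a ha, hv _ hfa] using h.apply_eq_add_one a ha hfa
  · obtain ham | ha := Finset.mem_insert.mp ha <;> obtain hbm | hb := Finset.mem_insert.mp hb
    · simp [ham, hbm]
    · simpa [ham, hv b hb] using (hlo b hb).trans (lt_add_one c)
    · simpa [hbm, hv a ha] using hhi a ha (hbm ▸ hba)
    · simpa [hv a ha, hv b hb] using h.lt_add_one_of_lt a ha b hb hba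

theorem exists_isShiftChart (hf : StrictMono f) (hlt : ∀ x, x < f x) (s : Finset α) :
    ∃ v : α → K, IsShiftChart f v s := by
  classical
  induction s using Finset.induction_on_max with
  | empty => exact ⟨0, by simp [StrictMonoOn], by simp, by simp⟩
  | insert m s hm ih =>
    obtain ⟨v, hv⟩ := ih
    obtain ⟨c, hlo, hhi, hforced⟩ := hv.exists_value_insert_max hf hm
    exact ⟨_, hv.insert_max hlt hm hlo hhi hforced⟩

end ShiftChart

/-- every order-automorphism `γ` of `(ℚ,<)` with `γ(x) > x` for all `x`
lies in the closure of the conjugacy class of the shift `st(x) = x + 1`: for every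
finite `A ⊆ ℚ` some conjugate of the shift agrees with `γ` on `A`. -/
theorem stmt13 (γ : Equiv.Perm ℚ) (hord : ∀ a b : ℚ, a < b ↔ γ a < γ b)
    (hplus : ∀ x : ℚ, x < γ x) :
    ∀ A : Finset ℚ, ∃ σ : Equiv.Perm ℚ, (∀ a b : ℚ, a < b ↔ σ a < σ b) ∧
      ∀ a ∈ A, γ a = (σ * Equiv.addRight (1 : ℚ) * σ⁻¹) a := by
  classical
  intro A
  have hγ : StrictMono γ := fun a b ↦ (hord a b).mp
  obtain ⟨v, hv⟩ := exists_isShiftChart (K := ℚ) hγ hplus (A ∪ A.image γ)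
  obtain ⟨τ, hτ⟩ := exists_orderIso_eq_of_strictMonoOn _ v hv.strictMonoOn
  refine ⟨τ.symm.toEquiv, fun a b ↦ τ.symm.lt_iff_lt.symm, fun a ha ↦ ?_⟩
  have ha' : a ∈ A ∪ A.image γ := Finset.mem_union_left _ ha
  have hγa : γ a ∈ A ∪ A.image γ := Finset.mem_union_right _ (Finset.mem_image_of_mem _ ha)
  have hshift : τ (γ a) = τ a + 1 := by
    rw [hτ _ ha', hτ _ hγa, hv.apply_eq_add_one a ha' hγa]
  simp [Equiv.Perm.mul_apply, ← hshift]
end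

section
/- Let γ, ρ be order-automorphisms of (ℚ, <). If γ lies in the closure of the conjugacy class of ρ in Aut(ℚ, <), then for every finite A ⊆ ℚ there is a map φ from the set of ⟨γ restricted to A⟩-partial-orbitals of A ∪ γ(A) to the set of orbitals of ρ that is order-preserving (with respect to the induced orderings), parity-preserving, and injective on orbitals of parity 0. -/
/-!
Choose `σ` with `γ = σρσ⁻¹` on `A ∪ γ(A)`; then `τ = σ⁻¹` is an order embedding with
`τ(γ a) = ρ(τ a)` on `A ∪ γ(A)`, and `φ = τ` works. Two `p`-related points lie in the segment
between some `c ∈ A` and `γ c`, which `τ` maps into the segment between `τ c` and `ρ(τ c)`,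
inside a single `ρ`-orbital. Monotonicity of `τ` gives the ordering, the intertwining relation
transports parities, and since fixed points of `ρ` have singleton orbitals, injectivity of `τ`
gives injectivity on orbitals of parity `0`.
-/

/-- The orbital of `x` under `γ`: `{q | ∃ m n : ℤ, γⁿ(x) ≤ q ≤ γᵐ(x)}`. -/
def qOrbital (γ : Equiv.Perm ℚ) (x : ℚ) : Set ℚ :=
  {q | ∃ m n : ℤ, (γ ^ n) x ≤ q ∧ q ≤ (γ ^ m) x}

/-- `I ⪯ J`: `I = J` or all of `I` lies below all of `J`. -/
def preceq (I J : Set ℚ) : Prop := I = J ∨ ∀ a ∈ I, ∀ b ∈ J, a < b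

/-- `dom(p) ∪ ran(p)` for `p = γ ↾ A`. -/
def suppSet (γ : Equiv.Perm ℚ) (A : Finset ℚ) : Set ℚ := ↑A ∪ (⇑γ) '' ↑A

/-- `p`-relatedness for `p = γ ↾ A`: `a = b`, or a chain condition through `p`-values
holds, depending on the (nonzero) parity of `a` or `b`. -/
def pRel (γ : Equiv.Perm ℚ) (A : Finset ℚ) (a b : ℚ) : Prop :=
  a ∈ suppSet γ A ∧ b ∈ suppSet γ A ∧
  (a = b ∨
    ((a < γ a ∨ b < γ b) ∧
      ((a ∈ (A : Set ℚ) ∧ a ≤ b ∧ b ≤ γ a) ∨ (b ∈ (A : Set ℚ) ∧ b ≤ a ∧ a ≤ γ b) ∨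
       (a ∈ (⇑γ) '' ↑A ∧ γ⁻¹ a ≤ b ∧ b ≤ a) ∨
       (b ∈ (⇑γ) '' ↑A ∧ γ⁻¹ b ≤ a ∧ a ≤ b))) ∨
    ((γ a < a ∨ γ b < b) ∧
      ((a ∈ (⇑γ) '' ↑A ∧ a ≤ b ∧ b ≤ γ⁻¹ a) ∨
       (b ∈ (⇑γ) '' ↑A ∧ b ≤ a ∧ a ≤ γ⁻¹ b) ∨
       (a ∈ (A : Set ℚ) ∧ γ a ≤ b ∧ b ≤ a) ∨
       (b ∈ (A : Set ℚ) ∧ γ b ≤ a ∧ a ≤ b))))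

theorem Equiv.Perm.strictMono_inv {α : Type*} [LinearOrder α] {f : Equiv.Perm α}
    (hf : StrictMono f) : StrictMono ⇑f⁻¹ := by
  intro a b hab
  exact hf.lt_iff_lt.mp (by simpa using hab)

theorem Equiv.Perm.monotone_zpow {α : Type*} [LinearOrder α] {f : Equiv.Perm α}
    (hf : StrictMono f) (n : ℤ) : Monotone ⇑(f ^ n) := by
  cases n with
  | ofNat k => simpa [Equiv.Perm.coe_pow] using (hf.iterate k).monotone
  | negSucc k =>
    rw [zpow_negSucc, ← inv_pow, Equiv.Perm.coe_pow]
    exact ((Equiv.Perm.strictMono_inv hf).iterate _).monotone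

section qOrbital

variable {ρ : Equiv.Perm ℚ}

theorem mem_qOrbital_self (x : ℚ) : x ∈ qOrbital ρ x := ⟨0, 0, by simp⟩

theorem qOrbital_subset_of_mem (hρ : StrictMono ρ) {x y : ℚ} (hy : y ∈ qOrbital ρ x) :
    qOrbital ρ y ⊆ qOrbital ρ x := by
  obtain ⟨m, n, hny, hym⟩ := hy
  rintro q ⟨m', n', hnq, hqm⟩
  refine ⟨m' + m, n' + n, ?_, ?_⟩
  · rw [zpow_add, Equiv.Perm.mul_apply]
    exact (Equiv.Perm.monotone_zpow hρ n' hny).trans hnq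
  · rw [zpow_add, Equiv.Perm.mul_apply]
    exact hqm.trans (Equiv.Perm.monotone_zpow hρ m' hym)

theorem mem_qOrbital_comm (hρ : StrictMono ρ) {x y : ℚ} (hy : y ∈ qOrbital ρ x) :
    x ∈ qOrbital ρ y := by
  obtain ⟨m, n, hny, hym⟩ := hy
  refine ⟨-n, -m, ?_, ?_⟩
  · simpa [← Equiv.Perm.mul_apply, ← zpow_add] using Equiv.Perm.monotone_zpow hρ (-m) hym
  · simpa [← Equiv.Perm.mul_apply, ← zpow_add] using Equiv.Perm.monotone_zpow hρ (-n) hny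

theorem qOrbital_eq_of_mem (hρ : StrictMono ρ) {x y : ℚ} (hy : y ∈ qOrbital ρ x) :
    qOrbital ρ y = qOrbital ρ x :=
  (qOrbital_subset_of_mem hρ hy).antisymm (qOrbital_subset_of_mem hρ (mem_qOrbital_comm hρ hy))

theorem qOrbital_eq_of_mem_uIcc (hρ : StrictMono ρ) {x y : ℚ} (hy : y ∈ Set.uIcc x (ρ x)) :
    qOrbital ρ y = qOrbital ρ x := by
  refine qOrbital_eq_of_mem hρ ?_
  rcases le_total x (ρ x) with hx | hx
  · rw [Set.uIcc_of_le hx] at hy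
    exact ⟨1, 0, by simpa using hy.1, by simpa using hy.2⟩
  · rw [Set.uIcc_of_ge hx] at hy
    exact ⟨0, 1, by simpa using hy.1, by simpa using hy.2⟩

theorem preceq_qOrbital_of_le (hρ : StrictMono ρ) {x y : ℚ} (hxy : x ≤ y) :
    preceq (qOrbital ρ x) (qOrbital ρ y) := by
  by_contra h
  simp only [preceq, not_or, not_forall, not_lt] at h
  obtain ⟨hne, a, ⟨m, -, -, ham⟩, b, hb, hba⟩ := h
  obtain ⟨-, n, hnb, -⟩ := id hb
  have hbx : b ∈ qOrbital ρ x :=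
    ⟨m, n, (Equiv.Perm.monotone_zpow hρ n hxy).trans hnb, hba.trans ham⟩
  exact hne ((qOrbital_eq_of_mem hρ hbx).symm.trans (qOrbital_eq_of_mem hρ hb))

theorem qOrbital_eq_singleton_of_apply_eq {x : ℚ} (hx : ρ x = x) : qOrbital ρ x = {x} := by
  have hfix (n : ℤ) : (ρ ^ n) x = x := Equiv.Perm.zpow_apply_eq_self_of_apply_eq_self hx n
  ext q
  simp only [qOrbital, hfix, exists_const, Set.mem_ofPred_eq, Set.mem_singleton_iff]
  exact ⟨fun h => le_antisymm h.2 h.1, fun h => ⟨h.ge, h.le⟩⟩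

end qOrbital

theorem pRel.exists_mem_uIcc {γ : Equiv.Perm ℚ} {A : Finset ℚ} {a b : ℚ} (h : pRel γ A a b) :
    ∃ c ∈ A, a ∈ Set.uIcc c (γ c) ∧ b ∈ Set.uIcc c (γ c) := by
  obtain ⟨ha, -, rfl | ⟨-, h⟩ | ⟨-, h⟩⟩ := h
  · rcases ha with ha | ⟨c, hc, rfl⟩
    · exact ⟨a, ha, Set.left_mem_uIcc, Set.left_mem_uIcc⟩
    · exact ⟨c, hc, Set.right_mem_uIcc, Set.right_mem_uIcc⟩
  -- in each chain condition one point is `c` or `γ c` for some `c ∈ A`, the other between them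
  all_goals
    rcases h with ⟨hc, h₁, h₂⟩ | ⟨hc, h₁, h₂⟩ | ⟨hc, h₁, h₂⟩ | ⟨hc, h₁, h₂⟩
    all_goals
      try obtain ⟨c, hc, rfl⟩ := hc
      try simp only [Equiv.Perm.coe_inv, Equiv.symm_apply_apply] at h₁ h₂
      exact ⟨_, hc, by simp [Set.mem_uIcc, *], by simp [Set.mem_uIcc, *]⟩

section Intertwining

variable {γ ρ : Equiv.Perm ℚ} {A : Finset ℚ} {τ : ℚ → ℚ}

theorem qOrbital_eq_of_pRel (hρ : StrictMono ρ) (hτ : Monotone τ)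
    (hint : ∀ c ∈ A, τ (γ c) = ρ (τ c)) {a b : ℚ} (h : pRel γ A a b) :
    qOrbital ρ (τ a) = qOrbital ρ (τ b) := by
  obtain ⟨c, hc, ha, hb⟩ := h.exists_mem_uIcc
  have horb : ∀ y ∈ Set.uIcc c (γ c), qOrbital ρ (τ y) = qOrbital ρ (τ c) := fun y hy =>
    qOrbital_eq_of_mem_uIcc hρ (hint c hc ▸ hτ.mapsTo_uIcc hy)
  exact (horb a ha).trans (horb b hb).symm

theorem qOrbital_eq_of_eqvGen_pRel (hρ : StrictMono ρ) (hτ : Monotone τ)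
    (hint : ∀ c ∈ A, τ (γ c) = ρ (τ c)) {a b : ℚ} (h : Relation.EqvGen (pRel γ A) a b) :
    qOrbital ρ (τ a) = qOrbital ρ (τ b) :=
  (InvImage.equivalence _ (fun x => qOrbital ρ (τ x)) eq_equivalence).eqvGen_iff.mp
    (Relation.EqvGen.mono (fun _ _ => qOrbital_eq_of_pRel hρ hτ hint) a b h)

theorem parity_iff_of_semiconj_at (hτ : StrictMono τ) {a : ℚ} (hint : τ (γ a) = ρ (τ a)) :
    (a < γ a ↔ τ a < ρ (τ a)) ∧ (γ a < a ↔ ρ (τ a) < τ a) ∧ (γ a = a ↔ ρ (τ a) = τ a) := by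
  rw [← hint]
  exact ⟨hτ.lt_iff_lt.symm, hτ.lt_iff_lt.symm, hτ.injective.eq_iff.symm⟩

theorem eq_of_qOrbital_eq_of_apply_eq_self (hτ : Function.Injective τ) {a b : ℚ}
    (ha : τ (γ a) = ρ (τ a)) (hb : τ (γ b) = ρ (τ b)) (hfa : γ a = a) (hfb : γ b = b)
    (h : qOrbital ρ (τ a) = qOrbital ρ (τ b)) : a = b := by
  rw [hfa] at ha
  rw [hfb] at hb
  rw [qOrbital_eq_singleton_of_apply_eq ha.symm, qOrbital_eq_singleton_of_apply_eq hb.symm,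
    Set.singleton_eq_singleton_iff] at h
  exact hτ h

end Intertwining

theorem stmt14_general (γ ρ : Equiv.Perm ℚ)
    (hρ : ∀ a b : ℚ, a < b ↔ ρ a < ρ b)
    (hcl : ∀ B : Finset ℚ, ∃ σ : Equiv.Perm ℚ, (∀ a b : ℚ, a < b ↔ σ a < σ b) ∧
      ∀ b ∈ B, γ b = (σ * ρ * σ⁻¹) b) :
    ∀ A : Finset ℚ, ∃ φ : ℚ → ℚ,
      (∀ a ∈ suppSet γ A, ∀ b ∈ suppSet γ A, Relation.EqvGen (pRel γ A) a b →
        qOrbital ρ (φ a) = qOrbital ρ (φ b)) ∧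
      (∀ a ∈ suppSet γ A, ∀ b ∈ suppSet γ A, a ≤ b →
        preceq (qOrbital ρ (φ a)) (qOrbital ρ (φ b))) ∧
      (∀ a ∈ suppSet γ A, (a < γ a ↔ φ a < ρ (φ a)) ∧ (γ a < a ↔ ρ (φ a) < φ a) ∧
        (γ a = a ↔ ρ (φ a) = φ a)) ∧
      (∀ a ∈ suppSet γ A, ∀ b ∈ suppSet γ A, γ a = a → γ b = b →
        qOrbital ρ (φ a) = qOrbital ρ (φ b) → Relation.EqvGen (pRel γ A) a b) := by
  intro A
  obtain ⟨σ, hσ, hconj⟩ := hcl (A ∪ A.image γ)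
  have hρ : StrictMono ρ := fun a b h => (hρ a b).mp h
  have hτ : StrictMono ⇑σ⁻¹ := Equiv.Perm.strictMono_inv fun a b h => (hσ a b).mp h
  have hint : ∀ a ∈ suppSet γ A, σ⁻¹ (γ a) = ρ (σ⁻¹ a) := fun a ha => by
    rw [hconj a (by rwa [← Finset.mem_coe, Finset.coe_union, Finset.coe_image])]
    simp
  refine ⟨⇑σ⁻¹, fun a _ b _ h => ?_, fun a _ b _ hab => ?_, fun a ha => ?_,
    fun a ha b hb hfa hfb h => ?_⟩
  · exact qOrbital_eq_of_eqvGen_pRel hρ hτ.monotone (fun c hc => hint c (Or.inl hc)) h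
  · exact preceq_qOrbital_of_le hρ (hτ.monotone hab)
  · exact parity_iff_of_semiconj_at hτ (hint a ha)
  · obtain rfl := eq_of_qOrbital_eq_of_apply_eq_self hτ.injective (hint a ha) (hint b hb) hfa hfb h
    exact Relation.EqvGen.refl a

/-- if `γ` lies in the closure of the conjugacy class of `ρ` in
`Aut(ℚ,<)`, then for every finite `A ⊆ ℚ` there is a map `φ` inducing a map from the
`(γ ↾ A)`-orbitals of `A ∪ γ(A)` to the orbitals of `ρ` which is order-preserving,
parity-preserving, and injective on orbitals of parity `0`. -/
theorem stmt14 (γ ρ : Equiv.Perm ℚ)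
    (hγ : ∀ a b : ℚ, a < b ↔ γ a < γ b) (hρ : ∀ a b : ℚ, a < b ↔ ρ a < ρ b)
    (hcl : ∀ B : Finset ℚ, ∃ σ : Equiv.Perm ℚ, (∀ a b : ℚ, a < b ↔ σ a < σ b) ∧
      ∀ b ∈ B, γ b = (σ * ρ * σ⁻¹) b) :
    ∀ A : Finset ℚ, ∃ φ : ℚ → ℚ,
      (∀ a ∈ suppSet γ A, ∀ b ∈ suppSet γ A, Relation.EqvGen (pRel γ A) a b →
        qOrbital ρ (φ a) = qOrbital ρ (φ b)) ∧
      (∀ a ∈ suppSet γ A, ∀ b ∈ suppSet γ A, a ≤ b →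
        preceq (qOrbital ρ (φ a)) (qOrbital ρ (φ b))) ∧
      (∀ a ∈ suppSet γ A, (a < γ a ↔ φ a < ρ (φ a)) ∧ (γ a < a ↔ ρ (φ a) < φ a) ∧
        (γ a = a ↔ ρ (φ a) = φ a)) ∧
      (∀ a ∈ suppSet γ A, ∀ b ∈ suppSet γ A, γ a = a → γ b = b →
        qOrbital ρ (φ a) = qOrbital ρ (φ b) → Relation.EqvGen (pRel γ A) a b) :=
  stmt14_general γ ρ hρ hcl
end

section
/- Let ρ ∈ Sym(ℕ) have no infinite cycles. Let P_ρ be the set of finite partial injections p of ℕ that extend to a permutation in the closure of the conjugacy class of ρ, and let P^c_ρ ⊆ P_ρ consist of those p ∈ P_ρ that are permutations of a finite subset of ℕ. Then P^c_ρ is cofinal in P_ρ and has the amalgamation property: for p₀ ⊆ p₁, p₀ ⊆ p₂ all in P^c_ρ there exist p₃ ∈ P^c_ρ and σ ∈ Sym(ℕ) fixing dom(p₀) ∪ ran(p₀) pointwise with p₁ ⊆ p₃ and σ p₂ σ⁻¹ ⊆ p₃. -/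
/-- A finite partial injection of `ℕ`, given by its graph. -/
def IsFinPartialInj (p : Set (ℕ × ℕ)) : Prop :=
  p.Finite ∧ ∀ x ∈ p, ∀ y ∈ p, (x.1 = y.1 ↔ x.2 = y.2)

/-- `γ` belongs to the closure of the conjugacy class of `ρ` in `Sym(ℕ)` with the
pointwise convergence topology: on every finite set, `γ` and `γ⁻¹` agree with a
conjugate of `ρ` and its inverse. -/
def inClosureConj (ρ γ : Equiv.Perm ℕ) : Prop :=
  ∀ A : Finset ℕ, ∃ σ : Equiv.Perm ℕ, ∀ a ∈ A,
    γ a = (σ * ρ * σ⁻¹) a ∧ γ⁻¹ a = (σ * ρ * σ⁻¹)⁻¹ a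

/-- `p ∈ P_ρ`: `p` is a finite partial injection extendable to a permutation in the
closure of the conjugacy class of `ρ`. -/
def memPrho (ρ : Equiv.Perm ℕ) (p : Set (ℕ × ℕ)) : Prop :=
  IsFinPartialInj p ∧ ∃ γ : Equiv.Perm ℕ, inClosureConj ρ γ ∧ ∀ x ∈ p, γ x.1 = x.2

/-- `p` is a permutation of a finite subset of `ℕ`: its domain equals its range. -/
def isFinPerm (p : Set (ℕ × ℕ)) : Prop := Prod.fst '' p = Prod.snd '' p

/-!
Every `p ∈ P_ρ` is extended by a conjugate `τ = σ ρ σ⁻¹`, whose cycles are finite because those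
of `ρ` are; the graph of `τ` on the finite union of the cycles through the domain of `p` is a
member of `P^c_ρ` containing `p`.

For amalgamation take conjugates `τ₁ ⊇ p₁` and `τ₂ ⊇ p₂`. Both agree with `p₀` on its domain
`A₀`, so the identity of `A₀` is a partial conjugation from `τ₂` to `τ₁`, and it extends to a
permutation `σ` with `σ τ₂ = τ₁ σ`. Then `σ` fixes `A₀`, and `p₁` and `σ p₂ σ⁻¹` both lie in the
graph of `τ₁`, which is closed up as before. The extension is built cycle by cycle: if an
equivariant injection `g` on a finite invariant set `T` does not map `T` into itself, some cycle
of `g '' T` lies outside `T`; since `g` preserves minimal periods, counting the points of that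
period in `T` and in `g '' T` gives a cycle of the same length in `T` outside `g '' T`, onto which
the missing cycle can be sent. When `g '' T = T`, extend `g` by the identity.
-/

open Equiv Equiv.Perm Function Set

namespace Equiv.Perm

variable {α : Type*} {τ : Perm α} {T : Set α}

theorem mapsTo_zpow_of_finite (hT : T.Finite) (hτT : MapsTo τ T T) (i : ℤ) :
    MapsTo ⇑(τ ^ i) T T := by
  have hinv : MapsTo ⇑τ⁻¹ T T := by
    intro y hy
    obtain ⟨x, hx, rfl⟩ := ((hT.injOn_iff_bijOn_of_mapsTo hτT).1 τ.injective.injOn).surjOn hy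
    simpa using hx
  induction i using Int.induction_on with
  | zero => simpa using mapsTo_id T
  | succ i ih => simpa [zpow_add_one] using ih.comp hτT
  | pred i ih => simpa [zpow_sub_one] using ih.comp hinv

theorem SameCycle.mem_of_mapsTo {x y : α} (hT : T.Finite) (hτT : MapsTo τ T T)
    (hxy : τ.SameCycle x y) (hx : x ∈ T) : y ∈ T := by
  obtain ⟨i, rfl⟩ := hxy
  exact mapsTo_zpow_of_finite hT hτT i hx

theorem zpow_apply_eq_zpow_apply_of_minimalPeriod_eq {e a : α}
    (h : minimalPeriod τ e = minimalPeriod τ a) {i j : ℤ} (hij : (τ ^ i) e = (τ ^ j) e) :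
    (τ ^ i) a = (τ ^ j) a := by
  have key : ∀ x : α, (τ ^ i) x = (τ ^ j) x ↔ (minimalPeriod τ x : ℤ) ∣ i - j := fun x => by
    have := MulAction.zpow_smul_eq_iff_minimalPeriod_dvd (a := τ) (b := x) (n := -j + i)
    rwa [zpow_add, zpow_neg, mul_smul, Perm.smul_def, Perm.smul_def, inv_eq_iff_eq,
      neg_add_eq_sub] at this
  rw [key] at hij ⊢
  rwa [← h]

structure IsEquivariantInjOn (τ : Perm α) (g : α → α) (T : Set α) : Prop where
  mapsTo : MapsTo τ T T
  injOn : InjOn g T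
  comm : ∀ x ∈ T, g (τ x) = τ (g x)

namespace IsEquivariantInjOn

variable {g : α → α}

theorem mapsTo_image (h : IsEquivariantInjOn τ g T) : MapsTo τ (g '' T) (g '' T) := by
  rintro _ ⟨x, hx, rfl⟩
  exact ⟨τ x, h.mapsTo hx, h.comm x hx⟩

theorem iterate_comm (h : IsEquivariantInjOn τ g T) (n : ℕ) {x : α} (hx : x ∈ T) :
    g (τ^[n] x) = τ^[n] (g x) := by
  induction n with
  | zero => rfl
  | succ n ih => rw [iterate_succ_apply', iterate_succ_apply', h.comm _ (h.mapsTo.iterate n hx), ih]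

theorem minimalPeriod_apply (h : IsEquivariantInjOn τ g T) {x : α} (hx : x ∈ T) :
    minimalPeriod τ (g x) = minimalPeriod τ x :=
  minimalPeriod_eq_minimalPeriod_iff.2 fun n => by
    rw [IsPeriodicPt, IsFixedPt, ← h.iterate_comm n hx]
    exact h.injOn.eq_iff (h.mapsTo.iterate n hx) hx

theorem exists_mem_notMem_image_minimalPeriod_eq (h : IsEquivariantInjOn τ g T) (hT : T.Finite)
    {e : α} (he : e ∈ g '' T) (heT : e ∉ T) :
    ∃ a ∈ T, a ∉ g '' T ∧ minimalPeriod τ a = minimalPeriod τ e := by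
  by_contra! hcon
  set Tₑ := {x ∈ T | minimalPeriod τ x = minimalPeriod τ e}
  have hTₑ : Tₑ ⊆ T := sep_subset _ _
  have hsub : Tₑ ⊆ g '' Tₑ := by
    rintro a ⟨ha, hae⟩
    obtain ⟨x, hx, rfl⟩ := not_not.1 fun h' => hcon a ha h' hae
    exact ⟨x, ⟨hx, (h.minimalPeriod_apply hx).symm.trans hae⟩, rfl⟩
  have heq : Tₑ = g '' Tₑ := eq_of_subset_of_ncard_le hsub
    (h.injOn.mono hTₑ).ncard_image.le ((hT.subset hTₑ).image g)
  obtain ⟨x₀, hx₀, rfl⟩ := he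
  exact heT (hTₑ (heq ▸ ⟨x₀, ⟨hx₀, h.minimalPeriod_apply hx₀ ▸ rfl⟩, rfl⟩))

theorem exists_extend_sameCycle (h : IsEquivariantInjOn τ g T) (hT : T.Finite) {e : α}
    (he : e ∈ g '' T) (heT : e ∉ T) :
    ∃ g' : α → α, EqOn g' g T ∧ IsEquivariantInjOn τ g' (T ∪ {x | τ.SameCycle e x}) ∧
      g' '' (T ∪ {x | τ.SameCycle e x}) ⊆ g '' T ∪ T := by
  classical
  obtain ⟨a, haT, hag, hper⟩ := h.exists_mem_notMem_image_minimalPeriod_eq hT he heT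
  -- `(τ ^ i) e ↦ (τ ^ i) a`, well defined because `e` and `a` have the same minimal period
  set g' : α → α := fun x => if hx : τ.SameCycle e x then (τ ^ hx.choose) a else g x
  have hg'_zpow (i : ℤ) : g' ((τ ^ i) e) = (τ ^ i) a := by
    have hx : τ.SameCycle e ((τ ^ i) e) := ⟨i, rfl⟩
    simp only [g', dif_pos hx]
    exact zpow_apply_eq_zpow_apply_of_minimalPeriod_eq hper.symm hx.choose_spec
  have hnotT {x : α} (hx : τ.SameCycle e x) : x ∉ T := fun hxT =>
    heT (hx.symm.mem_of_mapsTo hT h.mapsTo hxT)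
  have hg'T : EqOn g' g T := fun x hx => dif_neg fun hex => hnotT hex hx
  refine ⟨g', hg'T, ⟨?_, ?_, ?_⟩, ?_⟩
  · rintro x (hx | hx)
    · exact Or.inl (h.mapsTo hx)
    · exact Or.inr (sameCycle_apply_right.2 hx)
  · rintro x (hx | ⟨i, rfl⟩) y (hy | ⟨j, rfl⟩) hxy
    · exact h.injOn hx hy (by rwa [hg'T hx, hg'T hy] at hxy)
    · rw [hg'T hx, hg'_zpow] at hxy
      refine absurd (SameCycle.mem_of_mapsTo (hT.image g) h.mapsTo_image ⟨-j, ?_⟩ ⟨x, hx, rfl⟩) hag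
      rw [hxy, zpow_neg, inv_eq_iff_eq]
    · rw [hg'T hy, hg'_zpow] at hxy
      refine absurd (SameCycle.mem_of_mapsTo (hT.image g) h.mapsTo_image ⟨-i, ?_⟩ ⟨y, hy, rfl⟩) hag
      rw [← hxy, zpow_neg, inv_eq_iff_eq]
    · rw [hg'_zpow, hg'_zpow] at hxy
      exact zpow_apply_eq_zpow_apply_of_minimalPeriod_eq hper hxy
  · rintro x (hx | ⟨i, rfl⟩)
    · rw [hg'T hx, hg'T (h.mapsTo hx), h.comm x hx]
    · rw [← mul_apply, ← zpow_one_add, hg'_zpow, hg'_zpow, zpow_one_add, mul_apply]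
  · rintro _ ⟨x, hx | ⟨i, rfl⟩, rfl⟩
    · exact Or.inl ⟨x, hx, (hg'T hx).symm⟩
    · exact Or.inr (by rw [hg'_zpow]; exact SameCycle.mem_of_mapsTo hT h.mapsTo ⟨i, rfl⟩ haT)

theorem exists_commute_eqOn_of_image_subset (h : IsEquivariantInjOn τ g T) (hT : T.Finite)
    (hgT : g '' T ⊆ T) : ∃ δ : Perm α, Commute δ τ ∧ EqOn δ g T := by
  classical
  have hbij : BijOn g T T :=
    (hT.injOn_iff_bijOn_of_mapsTo (mapsTo_iff_image_subset.2 hgT)).1 h.injOn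
  refine ⟨ofSubtype (hbij.equiv g), ext fun x => ?_, fun x hx => ofSubtype_apply_of_mem _ hx⟩
  by_cases hx : x ∈ T
  · rw [mul_apply, mul_apply, ofSubtype_apply_of_mem _ hx, ofSubtype_apply_of_mem _ (h.mapsTo hx)]
    exact h.comm x hx
  · have hτx : τ x ∉ T := fun hτx =>
      hx (SameCycle.mem_of_mapsTo hT h.mapsTo (sameCycle_apply_left.2 (SameCycle.refl τ x)) hτx)
    simp [ofSubtype_apply_of_not_mem _ hx, ofSubtype_apply_of_not_mem _ hτx]

theorem exists_commute_eqOn (h : IsEquivariantInjOn τ g T) (hT : T.Finite) :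
    ∃ δ : Perm α, Commute δ τ ∧ EqOn δ g T := by
  induction hN : (g '' T \ T).ncard using Nat.strong_induction_on generalizing T g with
  | _ N ih =>
  by_cases hgT : g '' T ⊆ T
  · exact h.exists_commute_eqOn_of_image_subset hT hgT
  obtain ⟨e, he, heT⟩ := not_subset.1 hgT
  obtain ⟨g', hg'g, hg', hg'im⟩ := h.exists_extend_sameCycle hT he heT
  have hcycle : {x | τ.SameCycle e x} ⊆ g '' T := fun x hx =>
    hx.mem_of_mapsTo (hT.image g) h.mapsTo_image he
  have hlt : (g' '' (T ∪ {x | τ.SameCycle e x}) \ (T ∪ {x | τ.SameCycle e x})).ncard < N := by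
    have hsub : g' '' (T ∪ {x | τ.SameCycle e x}) \ (T ∪ {x | τ.SameCycle e x}) ⊆ g '' T \ T :=
      fun y hy => ⟨(hg'im hy.1).resolve_right (hy.2 ∘ Or.inl), hy.2 ∘ Or.inl⟩
    rw [← hN]
    refine ncard_lt_ncard ((ssubset_iff_of_subset hsub).2 ⟨e, ⟨he, heT⟩, ?_⟩) (hT.image g).sdiff
    exact fun he' => he'.2 (Or.inr (SameCycle.refl τ e))
  obtain ⟨δ, hδτ, hδg'⟩ := ih _ hlt hg' (hT.union ((hT.image g).subset hcycle)) rfl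
  exact ⟨δ, hδτ, fun x hx => (hδg' (Or.inl hx)).trans (hg'g hx)⟩

end IsEquivariantInjOn

theorem exists_semiconjBy_eqOn {τ' : Perm α} (hconj : IsConj τ τ') {g : α → α} (hT : T.Finite)
    (hτT : MapsTo τ T T) (hg : InjOn g T) (hcomm : ∀ x ∈ T, g (τ x) = τ' (g x)) :
    ∃ σ : Perm α, SemiconjBy σ τ τ' ∧ EqOn σ g T := by
  obtain ⟨π, hπ⟩ := isConj_iff.1 hconj
  have hπτ (x : α) : π (τ x) = τ' (π x) := by simp [← hπ]
  have h : IsEquivariantInjOn τ' (g ∘ ⇑π⁻¹) (π '' T) := by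
    refine ⟨?_, hg.comp (π⁻¹.injective.injOn) ?_, ?_⟩
    · rintro _ ⟨x, hx, rfl⟩
      exact ⟨τ x, hτT hx, hπτ x⟩
    · rintro _ ⟨x, hx, rfl⟩
      simpa using hx
    · rintro _ ⟨x, hx, rfl⟩
      simp [← hπτ, hcomm x hx]
  obtain ⟨δ, hδ, hδg⟩ := h.exists_commute_eqOn (hT.image π)
  refine ⟨δ * π, ext fun x => ?_, fun x hx => ?_⟩
  · simp [hπτ, ← mul_apply δ τ', hδ.eq]
  · simpa using hδg ⟨x, hx, rfl⟩

theorem exists_finite_superset_image_eq (hτ : ∀ x, {y | τ.SameCycle x y}.Finite)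
    {B : Set α} (hB : B.Finite) : ∃ O : Set α, O.Finite ∧ B ⊆ O ∧ τ '' O = O := by
  refine ⟨⋃ b ∈ B, {y | τ.SameCycle b y}, hB.biUnion fun b _ => hτ b,
    fun b hb => mem_biUnion hb (SameCycle.refl τ b), ?_⟩
  ext y
  simp [Equiv.image_eq_preimage_symm]

end Equiv.Perm

theorem Set.subset_graphOn_image_fst {α β : Type*} {f : α → β} {p : Set (α × β)}
    (h : ∀ x ∈ p, f x.1 = x.2) : p ⊆ (Prod.fst '' p).graphOn f :=
  fun x hx => mem_graphOn.2 ⟨⟨x, hx, rfl⟩, h x hx⟩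

section

variable {ρ : Perm ℕ}

theorem finite_sameCycle_conj (hfin : ∀ x, (orbitOf ρ x).Finite) (σ : Perm ℕ) (x : ℕ) :
    {y | (σ * ρ * σ⁻¹).SameCycle x y}.Finite :=
  ((hfin (σ⁻¹ x)).preimage σ⁻¹.injective.injOn).subset fun _ => sameCycle_conj.1

theorem memPrho_graphOn_conj (σ : Perm ℕ) {O : Set ℕ} (hO : O.Finite) :
    memPrho ρ (O.graphOn ⇑(σ * ρ * σ⁻¹)) := by
  refine ⟨⟨hO.image _, ?_⟩, σ * ρ * σ⁻¹, fun _ => ⟨σ, fun _ _ => ⟨rfl, rfl⟩⟩, fun x hx => ?_⟩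
  · rintro _ ⟨x, -, rfl⟩ _ ⟨y, -, rfl⟩
    exact (σ * ρ * σ⁻¹).injective.eq_iff.symm
  · exact (mem_graphOn.1 hx).2

theorem isFinPerm_graphOn {f : ℕ → ℕ} {O : Set ℕ} (h : f '' O = O) : isFinPerm (O.graphOn f) := by
  rw [isFinPerm, image_fst_graphOn, image_snd_graphOn, h]

theorem memPrho.exists_conj {p : Set (ℕ × ℕ)} (hp : memPrho ρ p) :
    ∃ σ : Perm ℕ, ∀ x ∈ p, (σ * ρ * σ⁻¹) x.1 = x.2 := by
  obtain ⟨⟨hfin, -⟩, γ, hγ, hγp⟩ := hp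
  obtain ⟨σ, hσ⟩ := hγ (hfin.image Prod.fst).toFinset
  exact ⟨σ, fun x hx => (hσ x.1 (by simpa using ⟨x.2, hx⟩)).1 ▸ hγp x hx⟩

theorem exists_memPrho_isFinPerm_graphOn_subset (hfin : ∀ x, (orbitOf ρ x).Finite)
    (σ : Perm ℕ) {B : Set ℕ} (hB : B.Finite) :
    ∃ q, memPrho ρ q ∧ isFinPerm q ∧ B.graphOn ⇑(σ * ρ * σ⁻¹) ⊆ q := by
  obtain ⟨O, hO, hBO, hτO⟩ := exists_finite_superset_image_eq (finite_sameCycle_conj hfin σ) hB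
  exact ⟨O.graphOn ⇑(σ * ρ * σ⁻¹), memPrho_graphOn_conj σ hO, isFinPerm_graphOn hτO,
    image_mono hBO⟩

end

/-- if `ρ` has no infinite cycles, then `P^c_ρ` (the members of `P_ρ`
that are permutations of finite sets) is cofinal in `P_ρ` and has the amalgamation
property. -/
theorem stmt15 (ρ : Equiv.Perm ℕ) (hfin : ∀ x : ℕ, (orbitOf ρ x).Finite) :
    (∀ p, memPrho ρ p → ∃ q, memPrho ρ q ∧ isFinPerm q ∧ p ⊆ q) ∧
    (∀ p₀ p₁ p₂ : Set (ℕ × ℕ),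
      memPrho ρ p₀ → memPrho ρ p₁ → memPrho ρ p₂ →
      isFinPerm p₀ → isFinPerm p₁ → isFinPerm p₂ →
      p₀ ⊆ p₁ → p₀ ⊆ p₂ →
      ∃ (p₃ : Set (ℕ × ℕ)) (σ : Equiv.Perm ℕ),
        memPrho ρ p₃ ∧ isFinPerm p₃ ∧
        (∀ a ∈ Prod.fst '' p₀ ∪ Prod.snd '' p₀, σ a = a) ∧
        p₁ ⊆ p₃ ∧ (fun x : ℕ × ℕ => (σ x.1, σ x.2)) '' p₂ ⊆ p₃) := by
  refine ⟨fun p hp => ?_, fun p₀ p₁ p₂ h₀ h₁ h₂ hc₀ _ _ h₀₁ h₀₂ => ?_⟩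
  · obtain ⟨σ, hσ⟩ := hp.exists_conj
    obtain ⟨q, hq, hqc, hpq⟩ :=
      exists_memPrho_isFinPerm_graphOn_subset hfin σ (hp.1.1.image Prod.fst)
    exact ⟨q, hq, hqc, (subset_graphOn_image_fst hσ).trans hpq⟩
  obtain ⟨σ₁, hσ₁⟩ := h₁.exists_conj
  obtain ⟨σ₂, hσ₂⟩ := h₂.exists_conj
  have hτ₂ : MapsTo ⇑(σ₂ * ρ * σ₂⁻¹) (Prod.fst '' p₀) (Prod.fst '' p₀) := by
    rintro _ ⟨x, hx, rfl⟩
    rw [hσ₂ x (h₀₂ hx), hc₀]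
    exact mem_image_of_mem _ hx
  have hτ₁₂ : ∀ x ∈ Prod.fst '' p₀, id ((σ₂ * ρ * σ₂⁻¹) x) = (σ₁ * ρ * σ₁⁻¹) (id x) := by
    rintro _ ⟨x, hx, rfl⟩
    rw [id, id, hσ₂ x (h₀₂ hx), hσ₁ x (h₀₁ hx)]
  obtain ⟨σ, hσ, hσp₀⟩ := exists_semiconjBy_eqOn (isConj_iff.2 ⟨σ₁ * σ₂⁻¹, by group⟩)
    (h₀.1.1.image Prod.fst) hτ₂ (injOn_id _) hτ₁₂
  obtain ⟨q, hq, hqc, hBq⟩ := exists_memPrho_isFinPerm_graphOn_subset hfin σ₁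
    ((h₁.1.1.image Prod.fst).union ((h₂.1.1.image Prod.fst).image σ))
  refine ⟨q, σ, hq, hqc, fun a ha => hσp₀ ?_, ?_, ?_⟩
  · rwa [← hc₀, union_self] at ha
  · exact (subset_graphOn_image_fst hσ₁).trans ((image_mono subset_union_left).trans hBq)
  · rintro _ ⟨x, hx, rfl⟩
    refine hBq (mem_graphOn.2 ⟨Or.inr (mem_image_of_mem σ (mem_image_of_mem _ hx)), ?_⟩)
    dsimp only
    rw [← hσ₂ x hx, ← mul_apply, ← hσ.eq, mul_apply]
end

section
/- Let Aut(ℚ, <) act on the set P of finite partial order-isomorphisms of (ℚ, <) by conjugation. Then the set of all p ∈ P with a single colored p-orbital of parity + and with no bad pairs is cofinal in the set P⁺ of all p ∈ P whose colored p-orbitals all have parity +: every p ∈ P⁺ extends to such a partial isomorphism. -/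
/-!
Interpolate `p` by a strictly increasing `G : ℚ → ℚ` with `x + δ ≤ G x` for some `δ > 0`: the
upper envelope of the line `x + δ` and of rays of a small slope `ε` issuing to the right from the
points of `p` works, once `δ` is below every displacement of `p` and `ε` below every slope between
two points of `p`. Let `q` be `G` restricted to the first `n` points of the `G`-orbits of the
points of `supp p`, with `n` so large that `G^[n] m` exceeds `supp p`, where `m = min (supp p)`.
The orbit of `m` then sweeps across `supp p` and links all these orbits into one orbital, and the
points outside `dom q` (orbit ends) all lie above the points outside `ran q` (orbit starts), so
there are no bad pairs.
-/

/-- A finite partial order-isomorphism of `(ℚ,<)`, given by its graph. -/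
def IsFPI (p : Set (ℚ × ℚ)) : Prop :=
  p.Finite ∧ ∀ x ∈ p, ∀ y ∈ p,
    (x.1 < y.1 ↔ x.2 < y.2) ∧ (x.1 = y.1 ↔ x.2 = y.2)

/-- All colored `p`-orbitals of `p` have parity `+`: `p` moves every point up. -/
def allPlus (p : Set (ℚ × ℚ)) : Prop := ∀ x ∈ p, x.1 < x.2

/-- The domain of the graph `p`. -/
def domS (p : Set (ℚ × ℚ)) : Set ℚ := Prod.fst '' p

/-- The range of the graph `p`. -/
def ranS (p : Set (ℚ × ℚ)) : Set ℚ := Prod.snd '' p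

/-- `dom(p) ∪ ran(p)`. -/
def supp (p : Set (ℚ × ℚ)) : Set ℚ := domS p ∪ ranS p

/-- `p`-relatedness for a parity-`+` partial isomorphism `p`:
`a = b` or `a ≤ b ≤ p(a)`, `b ≤ a ≤ p(b)`, `p⁻¹(a) ≤ b ≤ a`, or `p⁻¹(b) ≤ a ≤ b`. -/
def prelPlus (p : Set (ℚ × ℚ)) (a b : ℚ) : Prop :=
  a = b ∨ ∃ x ∈ p,
    (x.1 = a ∧ a ≤ b ∧ b ≤ x.2) ∨ (x.1 = b ∧ b ≤ a ∧ a ≤ x.2) ∨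
    (x.2 = a ∧ x.1 ≤ b ∧ b ≤ a) ∨ (x.2 = b ∧ x.1 ≤ a ∧ a ≤ b)

/-- All elements of `dom(p) ∪ ran(p)` are in a single `p`-orbital. -/
def singleOrbital (p : Set (ℚ × ℚ)) : Prop :=
  ∀ a ∈ supp p, ∀ b ∈ supp p, Relation.EqvGen (prelPlus p) a b

/-- `p` (all of whose colored orbitals have parity `+`) has no bad pairs: there is no
pair `a < a'` in `dom(p) ∪ ran(p)` with `p(a)` and `p⁻¹(a')` both undefined. -/
def noBadPairs (p : Set (ℚ × ℚ)) : Prop :=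
  ¬ ∃ a ∈ supp p, ∃ a' ∈ supp p, a < a' ∧ a ∉ domS p ∧ a' ∉ ranS p

lemma Set.Finite.exists_pos_forall_le {α β : Type*} [LinearOrder β] [Zero β] [NoMaxOrder β]
    {T : Set α} (hT : T.Finite) {f : α → β} (hf : ∀ t ∈ T, 0 < f t) :
    ∃ ε > 0, ∀ t ∈ T, ε ≤ f t := by
  rcases T.eq_empty_or_nonempty with rfl | hne
  · obtain ⟨ε, hε⟩ := exists_gt (0 : β)
    exact ⟨ε, hε, by simp⟩
  · obtain ⟨t, ht, hmin⟩ := Set.exists_min_image T f hT hne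
    exact ⟨f t, hf t ht, hmin⟩

def lineEnvelope (P : Finset (ℚ × ℚ)) (δ ε x : ℚ) : ℚ :=
  (insert (x + δ) ((P.filter (·.1 ≤ x)).image fun z => z.2 + ε * (x - z.1))).max'
    (Finset.insert_nonempty _ _)

section lineEnvelope

variable {P : Finset (ℚ × ℚ)} {δ ε : ℚ}

lemma add_le_lineEnvelope (x : ℚ) : x + δ ≤ lineEnvelope P δ ε x :=
  Finset.le_max' _ _ (Finset.mem_insert_self _ _)

lemma ray_le_lineEnvelope {z : ℚ × ℚ} (hz : z ∈ P) {x : ℚ} (hzx : z.1 ≤ x) :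
    z.2 + ε * (x - z.1) ≤ lineEnvelope P δ ε x := by
  apply Finset.le_max'
  exact Finset.mem_insert_of_mem (Finset.mem_image.2 ⟨z, Finset.mem_filter.2 ⟨hz, hzx⟩, rfl⟩)

lemma strictMono_lineEnvelope (hε : 0 < ε) : StrictMono (lineEnvelope P δ ε) := by
  intro x y hxy
  have hmem : lineEnvelope P δ ε x ∈ _ := Finset.max'_mem _ _
  rcases Finset.mem_insert.1 hmem with hline | hray
  · rw [hline]
    exact (add_lt_add_left hxy δ).trans_le (add_le_lineEnvelope y)
  · obtain ⟨z, hz, hzx⟩ := Finset.mem_image.1 hray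
    rw [Finset.mem_filter] at hz
    rw [← hzx]
    calc z.2 + ε * (x - z.1) < z.2 + ε * (y - z.1) := by gcongr
      _ ≤ _ := ray_le_lineEnvelope hz.1 (hz.2.trans hxy.le)

lemma lineEnvelope_eq {z : ℚ × ℚ} (hz : z ∈ P) (hδ : z.1 + δ ≤ z.2)
    (hε : ∀ w ∈ P, w.1 ≤ z.1 → w.2 + ε * (z.1 - w.1) ≤ z.2) :
    lineEnvelope P δ ε z.1 = z.2 := by
  refine le_antisymm (Finset.max'_le _ _ _ fun y hy => ?_) ?_
  · rcases Finset.mem_insert.1 hy with rfl | hray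
    · exact hδ
    · obtain ⟨w, hw, rfl⟩ := Finset.mem_image.1 hray
      rw [Finset.mem_filter] at hw
      exact hε w hw.1 hw.2
  · simpa using ray_le_lineEnvelope (δ := δ) (ε := ε) hz le_rfl

end lineEnvelope

lemma IsFPI.exists_strictMono_extension {p : Set (ℚ × ℚ)} (hp : IsFPI p) (hplus : allPlus p) :
    ∃ G : ℚ → ℚ, StrictMono G ∧ (∀ z ∈ p, G z.1 = z.2) ∧ ∃ δ > 0, ∀ x, x + δ ≤ G x := by
  obtain ⟨δ, hδ, hδp⟩ := hp.1.exists_pos_forall_le (f := fun z => z.2 - z.1)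
    fun z hz => sub_pos.2 (hplus z hz)
  have hpairs : {zw : (ℚ × ℚ) × (ℚ × ℚ) | zw.1 ∈ p ∧ zw.2 ∈ p ∧ zw.1.1 < zw.2.1}.Finite :=
    (hp.1.prod hp.1).subset fun zw h => ⟨h.1, h.2.1⟩
  obtain ⟨ε, hε, hεp⟩ := hpairs.exists_pos_forall_le
    (f := fun zw => (zw.2.2 - zw.1.2) / (zw.2.1 - zw.1.1))
    fun zw ⟨hz, hw, hlt⟩ => div_pos (sub_pos.2 ((hp.2 _ hz _ hw).1.1 hlt)) (sub_pos.2 hlt)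
  refine ⟨lineEnvelope hp.1.toFinset δ ε, strictMono_lineEnvelope hε,
    fun z hz => lineEnvelope_eq (hp.1.mem_toFinset.2 hz) ?_ ?_, δ, hδ, add_le_lineEnvelope⟩
  · linarith [hδp z hz]
  · intro w hw hwz
    rw [Set.Finite.mem_toFinset] at hw
    rcases hwz.lt_or_eq with hlt | heq
    · have hslope := hεp (w, z) ⟨hw, hz, hlt⟩
      rw [le_div_iff₀ (sub_pos.2 hlt)] at hslope
      linarith
    · rw [heq, ← (hp.2 w hw z hz).2.1 heq]
      simp

lemma exists_lt_iterate {G : ℚ → ℚ} {δ : ℚ} (hδ : 0 < δ) (hG : ∀ x, x + δ ≤ G x) (m M : ℚ) :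
    ∃ n : ℕ, M < G^[n] m := by
  have hiter : ∀ n : ℕ, m + n * δ ≤ G^[n] m := by
    intro n
    induction n with
    | zero => simp
    | succ n ih =>
      rw [Function.iterate_succ_apply']
      push_cast
      linarith [hG (G^[n] m)]
  obtain ⟨n, hn⟩ := exists_nat_gt ((M - m) / δ)
  refine ⟨n, lt_of_lt_of_le ?_ (hiter n)⟩
  rw [div_lt_iff₀ hδ] at hn
  linarith

def graphOn (G : ℚ → ℚ) (D : Set ℚ) : Set (ℚ × ℚ) := (fun x => (x, G x)) '' D

def iterSegment (G : ℚ → ℚ) (S : Set ℚ) (n : ℕ) : Set ℚ := {x | ∃ s ∈ S, ∃ i < n, G^[i] s = x}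

section graphOn

variable {G : ℚ → ℚ} {D S : Set ℚ} {n : ℕ}

lemma isFPI_graphOn (hG : StrictMono G) (hD : D.Finite) : IsFPI (graphOn G D) := by
  refine ⟨hD.image _, ?_⟩
  rintro _ ⟨x, -, rfl⟩ _ ⟨y, -, rfl⟩
  exact ⟨hG.lt_iff_lt.symm, hG.injective.eq_iff.symm⟩

lemma allPlus_graphOn (hG : ∀ x, x < G x) : allPlus (graphOn G D) := by
  rintro _ ⟨x, -, rfl⟩
  exact hG x

lemma domS_graphOn : domS (graphOn G D) = D := by
  simp [domS, graphOn, Set.image_image]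

lemma ranS_graphOn : ranS (graphOn G D) = G '' D := by
  simp [ranS, graphOn, Set.image_image]

lemma prelPlus_graphOn {x t : ℚ} (hx : x ∈ D) (hxt : x ≤ t) (htG : t ≤ G x) :
    prelPlus (graphOn G D) x t :=
  Or.inr ⟨(x, G x), ⟨x, hx, rfl⟩, Or.inl ⟨rfl, hxt, htG⟩⟩

lemma eqvGen_prelPlus_graphOn (hG : ∀ x, x ≤ G x) {x : ℚ} (hx : ∀ i < n, G^[i] x ∈ D) :
    ∀ i ≤ n, ∀ t, x ≤ t → t ≤ G^[i] x → Relation.EqvGen (prelPlus (graphOn G D)) x t := by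
  intro i
  induction i with
  | zero =>
    intro _ t hxt htx
    rw [le_antisymm htx hxt]
    exact Relation.EqvGen.refl x
  | succ i ih =>
    intro hi t hxt ht
    rcases le_or_gt t (G^[i] x) with hti | hit
    · exact ih (Nat.le_of_succ_le hi) t hxt hti
    · have hstep : prelPlus (graphOn G D) (G^[i] x) t := by
        refine prelPlus_graphOn (hx i hi) hit.le ?_
        rwa [← Function.iterate_succ_apply' G i x]
      have hxi : x ≤ G^[i] x := Function.id_le_iterate_of_id_le hG i x
      exact (ih (Nat.le_of_succ_le hi) _ hxi le_rfl).trans _ _ _ (Relation.EqvGen.rel _ _ hstep)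

lemma iterSegment_finite (hS : S.Finite) : (iterSegment G S n).Finite := by
  refine ((Finset.range n).finite_toSet.biUnion fun i _ => hS.image G^[i]).subset ?_
  rintro x ⟨s, hs, i, hi, rfl⟩
  exact Set.mem_biUnion (Finset.mem_range.2 hi) (Set.mem_image_of_mem _ hs)

lemma exists_iterate_eq_of_mem_supp {t : ℚ} (ht : t ∈ supp (graphOn G (iterSegment G S n))) :
    ∃ s ∈ S, ∃ i ≤ n, G^[i] s = t := by
  rw [supp, domS_graphOn, ranS_graphOn] at ht
  rcases ht with ⟨s, hs, i, hi, rfl⟩ | ⟨_, ⟨s, hs, i, hi, rfl⟩, rfl⟩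
  · exact ⟨s, hs, i, hi.le, rfl⟩
  · exact ⟨s, hs, i + 1, hi, Function.iterate_succ_apply' G i s⟩

lemma subset_graphOn_iterSegment {p : Set (ℚ × ℚ)} (hGp : ∀ z ∈ p, G z.1 = z.2)
    (hS : domS p ⊆ S) (hn : 0 < n) : p ⊆ graphOn G (iterSegment G S n) := by
  intro z hz
  exact ⟨z.1, ⟨z.1, hS ⟨z, hz, rfl⟩, 0, hn, rfl⟩, Prod.ext rfl (hGp z hz)⟩

/-- All orbits start in `[m, G^[n] m]` and `m`'s own orbit covers that interval step by step. -/
lemma singleOrbital_graphOn_iterSegment (hG : ∀ x, x ≤ G x) {m : ℚ} (hmS : m ∈ S)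
    (hm : ∀ s ∈ S, m ≤ s) (hn : ∀ s ∈ S, s ≤ G^[n] m) :
    singleOrbital (graphOn G (iterSegment G S n)) := by
  have hrel : ∀ s ∈ S, ∀ i ≤ n, ∀ t, s ≤ t → t ≤ G^[i] s →
      Relation.EqvGen (prelPlus (graphOn G (iterSegment G S n))) s t :=
    fun s hs => eqvGen_prelPlus_graphOn hG fun i hi => ⟨s, hs, i, hi, rfl⟩
  have hm_rel : ∀ t ∈ supp (graphOn G (iterSegment G S n)),
      Relation.EqvGen (prelPlus (graphOn G (iterSegment G S n))) m t := by
    intro t ht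
    obtain ⟨s, hs, i, hi, rfl⟩ := exists_iterate_eq_of_mem_supp ht
    exact (hrel m hmS n le_rfl s (hm s hs) (hn s hs)).trans _ _ _
      (hrel s hs i hi _ (Function.id_le_iterate_of_id_le hG i s) le_rfl)
  intro a ha b hb
  exact ((hm_rel a ha).symm _ _).trans _ _ _ (hm_rel b hb)

/-- A point outside the domain ends an orbit, hence lies at or above `G^[n] m`; a point outside
the range starts one, hence lies in `S`, below `G^[n] m`. -/
lemma noBadPairs_graphOn_iterSegment (hG : Monotone G) {m : ℚ} (hm : ∀ s ∈ S, m ≤ s)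
    (hn : ∀ s ∈ S, s ≤ G^[n] m) :
    noBadPairs (graphOn G (iterSegment G S n)) := by
  rintro ⟨a, ha, a', ha', haa', hadom, haran⟩
  rw [domS_graphOn] at hadom
  rw [ranS_graphOn] at haran
  obtain ⟨s, hs, i, hi, rfl⟩ := exists_iterate_eq_of_mem_supp ha
  obtain ⟨s', hs', j, hj, rfl⟩ := exists_iterate_eq_of_mem_supp ha'
  obtain rfl : i = n := hi.eq_of_not_lt fun hlt => hadom ⟨s, hs, i, hlt, rfl⟩
  obtain rfl : j = 0 := by
    rcases j with _ | j
    · rfl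
    · exact (haran ⟨G^[j] s', ⟨s', hs', j, hj, rfl⟩, (Function.iterate_succ_apply' G j s').symm⟩).elim
  have hs'a : s' ≤ G^[i] s := (hn s' hs').trans (hG.iterate i (hm s hs))
  exact haa'.not_ge hs'a

end graphOn

/-- the set of finite partial order-isomorphisms of `(ℚ,<)` with a
single colored `p`-orbital of parity `+` and no bad pairs is cofinal in `P⁺`: every
`p ∈ P⁺` extends to such a partial isomorphism. -/
theorem stmt19 :
    ∀ p : Set (ℚ × ℚ), IsFPI p → allPlus p →
      ∃ q : Set (ℚ × ℚ), IsFPI q ∧ allPlus q ∧ p ⊆ q ∧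
        singleOrbital q ∧ noBadPairs q := by
  intro p hp hplus
  obtain ⟨G, hG, hGp, δ, hδ, hGδ⟩ := hp.exists_strictMono_extension hplus
  have hGx : ∀ x, x < G x := fun x => by linarith [hGδ x]
  -- `0` only makes `S` nonempty when `p = ∅`
  set S := insert 0 (supp p)
  have hS : S.Finite := ((hp.1.image Prod.fst).union (hp.1.image Prod.snd)).insert 0
  obtain ⟨m, hmS, hm⟩ := Set.exists_min_image S id hS (Set.insert_nonempty _ _)
  obtain ⟨M, hM⟩ := hS.bddAbove
  obtain ⟨n, hn⟩ := exists_lt_iterate hδ hGδ m M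
  have hnS : ∀ s ∈ S, s ≤ G^[n] m := fun s hs => (hM hs).trans hn.le
  have hn0 : 0 < n := Nat.pos_of_ne_zero fun h => by subst h; exact hn.not_ge (hM hmS)
  exact ⟨graphOn G (iterSegment G S n), isFPI_graphOn hG (iterSegment_finite hS),
    allPlus_graphOn hGx, subset_graphOn_iterSegment hGp (fun a ha => Or.inr (Or.inl ha)) hn0,
    singleOrbital_graphOn_iterSegment (fun x => (hGx x).le) hmS hm hnS,
    noBadPairs_graphOn_iterSegment hG.monotone hm hnS⟩
end
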